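/- arXiv:1609.04666 — 2 statements merged into one kernel-verified Lean document; each statement's English description precedes it below -/
import Mathlib

section
/- Suppose f₁,…,f_n : ℝ^N → ℝ are convex differentiable with ∑ᵢ ∇fᵢ(z*) = 0, and L_P, L_I are Laplacians of a connected undirected graph. If along a trajectory x(t) of the closed-loop system [ẋ; ξ̇] = -[[L̄_P, -L̄_I],[L̄_I, 0]][x;ξ] - α[I;0]φ(x) (with φ(x) the stacked gradients ∇fᵢ(xᵢ)), both xᵀL̄_P x ≡ 0 and ∑ᵢ (xᵢ - z*)ᵀ(∇fᵢ(xᵢ) - ∇fᵢ(z*)) ≡ 0 hold, then all xᵢ(t) are equal to a common vector c(t) and f(c(t)) = f(z*), i.e., c(t) is an optimal solution of min ∑ᵢ fᵢ. -/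
/-!
The condition `xᵀ L̄_P x = 0` forces consensus `xᵢ = c` by connectivity. Since the gradients
at `z*` sum to zero, the incremental condition then reads `⟪∑ᵢ ∇fᵢ(c), z* - c⟫ = 0`, so the
first-order convexity inequality at `c`, summed over `i`, gives `f(c) ≤ f(z*)`; the same
inequality at `z*` gives the reverse bound.
-/

open scoped RealInnerProductSpace

theorem ConvexOn.add_apply_sub_le_of_hasFDerivAt {E : Type*} [NormedAddCommGroup E]
    [NormedSpace ℝ E] {s : Set E} {f : E → ℝ} {f' : StrongDual ℝ E} {x y : E}
    (hf : ConvexOn ℝ s f) (hx : x ∈ s) (hy : y ∈ s) (hf' : HasFDerivAt f f' x) :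
    f x + f' (y - x) ≤ f y := by
  have hline : ConvexOn ℝ (AffineMap.lineMap x y ⁻¹' s) (f ∘ AffineMap.lineMap x y) :=
    hf.comp_affineMap _
  have hderiv : HasDerivAt (f ∘ AffineMap.lineMap (k := ℝ) x y) (f' (y - x)) 0 := by
    have hf'₀ : HasFDerivAt f f' (AffineMap.lineMap x y (0 : ℝ)) := by simpa using hf'
    exact hf'₀.comp_hasDerivAt (0 : ℝ) AffineMap.hasDerivAt_lineMap
  have := hline.le_slope_of_hasDerivAt (by simpa using hx) (by simpa using hy) one_pos hderiv
  simp only [slope_def_field, Function.comp_apply, AffineMap.lineMap_apply_zero,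
    AffineMap.lineMap_apply_one, sub_zero, div_one] at this
  linarith

theorem ConvexOn.add_inner_sub_le_of_hasGradientAt {E : Type*} [NormedAddCommGroup E]
    [InnerProductSpace ℝ E] [CompleteSpace E] {s : Set E} {f : E → ℝ} {g x y : E}
    (hf : ConvexOn ℝ s f) (hx : x ∈ s) (hy : y ∈ s) (hg : HasGradientAt f g x) :
    f x + ⟪g, y - x⟫ ≤ f y :=
  hf.add_apply_sub_le_of_hasFDerivAt hx hy hg.hasFDerivAt

theorem sum_add_inner_sum_sub_le_of_hasGradientAt {ι E : Type*} [NormedAddCommGroup E]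
    [InnerProductSpace ℝ E] [CompleteSpace E] {t : Finset ι} {f : ι → E → ℝ} {g : ι → E}
    {x : E} (hf : ∀ i ∈ t, ConvexOn ℝ Set.univ (f i))
    (hg : ∀ i ∈ t, HasGradientAt (f i) (g i) x) (y : E) :
    ∑ i ∈ t, f i x + ⟪∑ i ∈ t, g i, y - x⟫ ≤ ∑ i ∈ t, f i y := by
  rw [sum_inner, ← Finset.sum_add_distrib]
  exact Finset.sum_le_sum fun i hi =>
    (hf i hi).add_inner_sub_le_of_hasGradientAt trivial trivial (hg i hi)

theorem lasalle_pi_consensus_optimal_general {n N : ℕ}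
    (f : Fin n → EuclideanSpace ℝ (Fin N) → ℝ)
    (gradf : Fin n → EuclideanSpace ℝ (Fin N) → EuclideanSpace ℝ (Fin N))
    (hconv : ∀ i, ConvexOn ℝ Set.univ (f i))
    (hgrad : ∀ i x, HasGradientAt (f i) (gradf i x) x)
    (zstar : EuclideanSpace ℝ (Fin N))
    (hopt : ∑ i, gradf i zstar = 0)
    (LP : Matrix (Fin n) (Fin n) ℝ)
    -- connectivity of the graph underlying the Laplacian `L_P`:
    -- `vᵀ L̄_P v = 0` forces consensus of the blocks of `v`
    (hconn : ∀ v : Fin n → EuclideanSpace ℝ (Fin N),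
      (∑ i, ⟪v i, ∑ j, LP i j • v j⟫) = 0 → ∀ i j, v i = v j)
    (x : ℝ → Fin n → EuclideanSpace ℝ (Fin N))
    (hquad : ∀ t, (∑ i, ⟪x t i, ∑ j, LP i j • x t j⟫) = 0)
    (hincr : ∀ t, (∑ i, ⟪x t i - zstar, gradf i (x t i) - gradf i zstar⟫) = 0) :
    ∀ t, ∃ c : EuclideanSpace ℝ (Fin N),
      (∀ i, x t i = c) ∧ (∑ i, f i c) = ∑ i, f i zstar := by
  intro t
  obtain ⟨c, hc⟩ : ∃ c, ∀ i, x t i = c := by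
    rcases isEmpty_or_nonempty (Fin n) with _ | ⟨⟨i₀⟩⟩
    · exact ⟨0, isEmptyElim⟩
    · exact ⟨x t i₀, fun i => hconn _ (hquad t) i i₀⟩
  have horth : ⟪∑ i, gradf i c, zstar - c⟫ = 0 := by
    have h := hincr t
    simp only [hc, ← inner_sum, Finset.sum_sub_distrib, hopt, sub_zero] at h
    rw [real_inner_comm, ← neg_sub, inner_neg_left, h, neg_zero]
  refine ⟨c, hc, le_antisymm ?_ ?_⟩
  · simpa [horth] using sum_add_inner_sum_sub_le_of_hasGradientAt (t := Finset.univ)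
      (fun i _ => hconv i) (fun i _ => hgrad i c) zstar
  · simpa [hopt] using sum_add_inner_sum_sub_le_of_hasGradientAt (t := Finset.univ)
      (fun i _ => hconv i) (fun i _ => hgrad i zstar) c

/-- LaSalle-type argument for the PI consensus-based distributed optimization
algorithm: along trajectories on which `xᵀ L̄_P x ≡ 0` and
`∑ᵢ (xᵢ - z*)ᵀ(∇fᵢ(xᵢ) - ∇fᵢ(z*)) ≡ 0`, all estimates coincide with a common
vector `c(t)` which is an optimal solution of `min ∑ᵢ fᵢ`. -/
theorem lasalle_pi_consensus_optimal {n N : ℕ}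
    (f : Fin n → EuclideanSpace ℝ (Fin N) → ℝ)
    (gradf : Fin n → EuclideanSpace ℝ (Fin N) → EuclideanSpace ℝ (Fin N))
    (hconv : ∀ i, ConvexOn ℝ Set.univ (f i))
    (hgrad : ∀ i x, HasGradientAt (f i) (gradf i x) x)
    (zstar : EuclideanSpace ℝ (Fin N))
    (hopt : ∑ i, gradf i zstar = 0)
    (hmin : ∀ z, (∑ i, f i zstar) ≤ ∑ i, f i z)
    (LP LI : Matrix (Fin n) (Fin n) ℝ)
    (hPsymm : LP.IsSymm) (hPpsd : LP.PosSemidef)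
    (hIsymm : LI.IsSymm) (hIpsd : LI.PosSemidef)
    -- connectivity of the graph underlying the Laplacian `L_P`:
    -- `vᵀ L̄_P v = 0` forces consensus of the blocks of `v`
    (hconn : ∀ v : Fin n → EuclideanSpace ℝ (Fin N),
      (∑ i, ⟪v i, ∑ j, LP i j • v j⟫) = 0 → ∀ i j, v i = v j)
    (α : ℝ) (hα : 0 < α)
    (x ξ : ℝ → Fin n → EuclideanSpace ℝ (Fin N))
    (hdynx : ∀ t i, HasDerivAt (fun s => x s i)
      (-(∑ j, LP i j • x t j) + (∑ j, LI i j • ξ t j) - α • gradf i (x t i)) t)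
    (hdynξ : ∀ t i, HasDerivAt (fun s => ξ s i) (-(∑ j, LI i j • x t j)) t)
    (hquad : ∀ t, (∑ i, ⟪x t i, ∑ j, LP i j • x t j⟫) = 0)
    (hincr : ∀ t, (∑ i, ⟪x t i - zstar, gradf i (x t i) - gradf i zstar⟫) = 0) :
    ∀ t, ∃ c : EuclideanSpace ℝ (Fin N),
      (∀ i, x t i = c) ∧ (∑ i, f i c) = ∑ i, f i zstar :=
  lasalle_pi_consensus_optimal_general f gradf hconv hgrad zstar hopt LP hconn x hquad hincr
end

section
/- Given the KKT stationarity condition ∇f(z*) + ∑ᵢ Γᵢ(z*)λᵢ* = 0 with Γᵢ = ∇gᵢ, the stacked vector φ(x*) + Γ(x*)λ* with x* = 1_n ⊗ z* satisfies (1_n ⊗ I_N)ᵀ(φ(x*) + Γ(x*)λ*) = 0, and hence (for a connected graph) there exists ξ* with L̄_I ξ* = α(φ(x*) + Γ(x*)λ*), making (x*, ξ*) an equilibrium of the constrained PI-consensus dynamics. -/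
open Matrix
open scoped Kronecker

/-- The coordinate-sum linear functional on `Fin n → ℝ`. -/
noncomputable def sumMap (n : ℕ) : (Fin n → ℝ) →ₗ[ℝ] ℝ where
  toFun v := ∑ i, v i
  map_add' u v := by simp [Finset.sum_add_distrib]
  map_smul' c v := by simp [Finset.mul_sum]

lemma surj_on_sumzero {n : ℕ} (LI : Matrix (Fin n) (Fin n) ℝ) (hsymm : LI.IsSymm)
    (hker : ∀ w : Fin n → ℝ, LI.mulVec w = 0 ↔ ∃ c : ℝ, w = fun _ => c)
    (w : Fin n → ℝ) (hw : ∑ i, w i = 0) : ∃ x, LI.mulVec x = w := by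
  rcases Nat.eq_zero_or_pos n with hn | hn
  · subst hn
    exact ⟨0, funext fun i => i.elim0⟩
  set f := LI.mulVecLin with hf
  -- kernel of f is the span of the constant vector 1
  have hkerf : LinearMap.ker f = Submodule.span ℝ {(fun _ => (1:ℝ) : Fin n → ℝ)} := by
    ext v
    simp only [LinearMap.mem_ker, hf, Matrix.mulVecLin_apply, hker,
      Submodule.mem_span_singleton]
    constructor
    · rintro ⟨c, rfl⟩; exact ⟨c, by funext i; simp⟩
    · rintro ⟨a, rfl⟩; exact ⟨a, by funext i; simp⟩
  have hone : (fun _ => (1:ℝ) : Fin n → ℝ) ≠ 0 := by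
    intro h
    have := congrFun h ⟨0, hn⟩
    simp at this
  have hkerdim : Module.finrank ℝ (LinearMap.ker f) = 1 := by
    rw [hkerf]; exact finrank_span_singleton hone
  have hrn := LinearMap.finrank_range_add_finrank_ker f
  rw [hkerdim] at hrn
  have hdimfull : Module.finrank ℝ (Fin n → ℝ) = n := by simp
  -- the sum functional is surjective
  have hsumsurj : LinearMap.range (sumMap n) = ⊤ := by
    rw [LinearMap.range_eq_top]
    intro c
    refine ⟨Pi.single ⟨0, hn⟩ c, ?_⟩
    simp [sumMap, Finset.sum_pi_single]
  have hS : Module.finrank ℝ (LinearMap.ker (sumMap n)) = n - 1 := by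
    have := LinearMap.finrank_range_add_finrank_ker (sumMap n)
    rw [hsumsurj, hdimfull] at this
    simp only [finrank_top, Module.finrank_self] at this
    omega
  -- range f ≤ ker sumMap
  have hle : LinearMap.range f ≤ LinearMap.ker (sumMap n) := by
    rintro _ ⟨x, rfl⟩
    have hcol : ∀ j, ∑ i, LI i j = 0 := by
      intro j
      have h1 : LI.mulVec (fun _ => (1:ℝ)) = 0 := (hker _).2 ⟨1, rfl⟩
      have := congrFun h1 j
      simp only [Matrix.mulVec, dotProduct, mul_one, Pi.zero_apply] at this
      rw [← this]
      exact Finset.sum_congr rfl fun i _ => by rw [← hsymm.apply i j]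
    simp only [LinearMap.mem_ker, sumMap, LinearMap.coe_mk, AddHom.coe_mk, hf,
      Matrix.mulVecLin_apply, Matrix.mulVec, dotProduct]
    rw [Finset.sum_comm]
    refine Finset.sum_eq_zero fun j _ => ?_
    rw [← Finset.sum_mul, hcol j, zero_mul]
  -- equal dimensions ⇒ equality
  have heq : LinearMap.range f = LinearMap.ker (sumMap n) := by
    apply Submodule.eq_of_le_of_finrank_le hle
    rw [hS]; omega
  have hwmem : w ∈ LinearMap.ker (sumMap n) := by
    simp only [LinearMap.mem_ker, sumMap, LinearMap.coe_mk, AddHom.coe_mk]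
    exact hw
  rw [← heq] at hwmem
  obtain ⟨x, hx⟩ := hwmem
  exact ⟨x, hx⟩

/-- KKT stationarity implies that the stacked vector `φ(x*) + Γ(x*)λ*` has
blockwise sum zero, and hence (for a connected graph) lies in the image of
`L̄_I` after scaling by `α`, giving an equilibrium of the constrained
PI-consensus dynamics. -/
theorem kkt_stationarity_equilibrium {n N : ℕ} (m : Fin n → ℕ)
    (gradf : Fin n → Fin N → ℝ)              -- ∇fᵢ(z*)
    (Γ : ∀ i : Fin n, Matrix (Fin N) (Fin (m i)) ℝ)  -- Γᵢ(z*) = ∇gᵢ(z*)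
    (lam : ∀ i : Fin n, Fin (m i) → ℝ)        -- KKT multipliers λᵢ*
    (hlam : ∀ i l, 0 ≤ lam i l)
    (hstat : (∑ i, gradf i) + ∑ i, (Γ i).mulVec (lam i) = 0)
    (LI : Matrix (Fin n) (Fin n) ℝ) (hsymm : LI.IsSymm) (hpsd : LI.PosSemidef)
    (hker : ∀ w : Fin n → ℝ, LI.mulVec w = 0 ↔ ∃ c : ℝ, w = fun _ => c)
    (α : ℝ) (hα : 0 < α) :
    (∀ k : Fin N, (∑ i, (gradf i k + (Γ i).mulVec (lam i) k)) = 0) ∧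
    ∃ ξstar : Fin n × Fin N → ℝ,
      (LI ⊗ₖ (1 : Matrix (Fin N) (Fin N) ℝ)).mulVec ξstar
        = fun p => α * (gradf p.1 p.2 + (Γ p.1).mulVec (lam p.1) p.2) := by
  have hsum : ∀ k : Fin N, (∑ i, (gradf i k + (Γ i).mulVec (lam i) k)) = 0 := by
    intro k
    have := congrFun hstat k
    simp only [Pi.add_apply, Finset.sum_apply, Pi.zero_apply] at this
    rw [Finset.sum_add_distrib]
    exact this
  refine ⟨hsum, ?_⟩
  have hxk : ∀ k : Fin N, ∃ x : Fin n → ℝ,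
      LI.mulVec x = fun i => α * (gradf i k + (Γ i).mulVec (lam i) k) := by
    intro k
    apply surj_on_sumzero LI hsymm hker
    rw [← Finset.mul_sum, hsum k, mul_zero]
  choose x hx using hxk
  refine ⟨fun p => x p.2 p.1, ?_⟩
  funext p
  obtain ⟨i, k⟩ := p
  have := congrFun (hx k) i
  simp only [Matrix.mulVec, dotProduct] at this ⊢
  rw [← this]
  rw [Fintype.sum_prod_type]
  refine Finset.sum_congr rfl fun j _ => ?_
  rw [Finset.sum_eq_single k]
  · simp [Matrix.kroneckerMap_apply, Matrix.one_apply]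
  · intro l _ hl
    simp [Matrix.kroneckerMap_apply, Matrix.one_apply, (Ne.symm hl)]
  · intro h; exact absurd (Finset.mem_univ k) h
end
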